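/- For partitions X and Y of Ω, the mutual information I(X;Y) := H(X) + H(Y) − H(X∨Y) equals μ(ΔX ∩ ΔY), the sum of μ(S) over atoms crossed by both X and Y. -/

import Mathlib

open Finset BigOperators

variable {Ω : Type*} [Fintype Ω] [DecidableEq Ω]

/-- Probability of a subset: `p(T) = Σ_{ω∈T} p(ω)`. -/
def pS (p : Ω → ℝ) (T : Finset Ω) : ℝ := ∑ ω ∈ T, p ω

/-- `p(T) log p(T)` (with `0 log 0 = 0` since `Real.log 0 = 0`). -/
noncomputable def plog (p : Ω → ℝ) (T : Finset Ω) : ℝ := pS p T * Real.log (pS p T)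

/-- The interior-loss measure of an atom `S`. -/
noncomputable def mu (p : Ω → ℝ) (S : Finset Ω) : ℝ :=
  ∑ T ∈ S.powerset.filter (· ≠ ∅), (-1 : ℝ) ^ (S.card - T.card) * plog p T

/-- `μ` of a set of atoms, extended additively. -/
noncomputable def muSet (p : Ω → ℝ) (R : Finset (Finset Ω)) : ℝ := ∑ S ∈ R, mu p S

/-- A partition `X` crosses an atom `S` when `S` meets at least two distinct parts. -/
def crossed (X : Finpartition (univ : Finset Ω)) (S : Finset Ω) : Prop :=
  ∃ P ∈ X.parts, ∃ Q ∈ X.parts, P ≠ Q ∧ (S ∩ P).Nonempty ∧ (S ∩ Q).Nonempty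

open scoped Classical in
/-- The content `ΔX`: set of atoms crossed by the partition `X`. -/
noncomputable def content (X : Finpartition (univ : Finset Ω)) : Finset (Finset Ω) :=
  (univ : Finset (Finset Ω)).filter (fun S => 2 ≤ S.card ∧ crossed X S)

/-- Shannon entropy of a partition. -/
noncomputable def Hent (p : Ω → ℝ) (X : Finpartition (univ : Finset Ω)) : ℝ :=
  - ∑ P ∈ X.parts, pS p P * Real.log (pS p P)

/-- `X` refines `Z`: every part of `X` lies in a part of `Z`. -/
def refines (X Z : Finpartition (univ : Finset Ω)) : Prop :=
  ∀ P ∈ X.parts, ∃ Q ∈ Z.parts, P ⊆ Q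

/-! `mu` is the Möbius inversion of `T ↦ p(T) log p(T)` on the lattice of subsets, so the values of
`mu` on the subsets of `S` add up to `p(S) log p(S)`. Over all subsets of `Ω` they add up to `0`,
since `p(Ω) = 1`. A nonempty set is not crossed by `X` exactly when it lies inside one part of `X`,
so the uncrossed sets contribute `∑_P p(P) log p(P) = -H(X)`, whence `H(X) = μ(ΔX)`. Finally
`X ⊓ Y` crosses `S` iff `X` or `Y` does, so `Δ(X ⊓ Y) = ΔX ∪ ΔY`, and additivity of `μ` over
`ΔX ∪ ΔY` gives `I(X;Y) = μ(ΔX ∩ ΔY)`. -/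

lemma sum_Icc_neg_one_pow_card_sub {α R : Type*} [DecidableEq α] [Ring R]
    {U S : Finset α} (hUS : U ⊆ S) :
    ∑ T ∈ Icc U S, (-1 : R) ^ (#T - #U) = if U = S then 1 else 0 := by
  have hdisj : ∀ V ∈ (S \ U).powerset, Disjoint U V := fun V hV =>
    disjoint_sdiff.mono_right (mem_powerset.mp hV)
  have hinj : Set.InjOn (U ∪ ·) ((S \ U).powerset : Set (Finset α)) := fun V hV W hW h => by
    rw [← union_sdiff_cancel_left (hdisj V hV), ← union_sdiff_cancel_left (hdisj W hW)]
    exact congrArg (· \ U) h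
  rw [Icc_eq_image_powerset hUS, sum_image hinj]
  calc ∑ V ∈ (S \ U).powerset, (-1 : R) ^ (#(U ∪ V) - #U)
      = ∑ V ∈ (S \ U).powerset, (-1 : R) ^ #V := sum_congr rfl fun V hV => by
        rw [card_union_of_disjoint (hdisj V hV), Nat.add_sub_cancel_left]
    _ = if U = S then 1 else 0 := by
        have halt := congrArg (Int.cast : ℤ → R) (sum_powerset_neg_one_pow_card (x := S \ U))
        push_cast [apply_ite (Int.cast : ℤ → R)] at halt
        rw [halt]
        exact if_congr (sdiff_eq_empty_iff_subset.trans ⟨hUS.antisymm, fun h => h ▸ Subset.rfl⟩)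
          rfl rfl

lemma moebius_inversion_powerset {α R : Type*} [DecidableEq α] [Ring R]
    (f : Finset α → R) (S : Finset α) :
    ∑ T ∈ S.powerset, ∑ U ∈ T.powerset, (-1 : R) ^ (#T - #U) * f U = f S := by
  calc ∑ T ∈ S.powerset, ∑ U ∈ T.powerset, (-1 : R) ^ (#T - #U) * f U
      = ∑ U ∈ S.powerset, ∑ T ∈ Icc U S, (-1 : R) ^ (#T - #U) * f U := by
        refine sum_comm' fun T U => ?_
        simp only [mem_powerset, mem_Icc]
        exact ⟨fun ⟨hTS, hUT⟩ => ⟨⟨hUT, hTS⟩, hUT.trans hTS⟩, fun ⟨⟨hUT, hTS⟩, _⟩ => ⟨hTS, hUT⟩⟩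
    _ = ∑ U ∈ S.powerset, if U = S then f U else 0 := sum_congr rfl fun U hU => by
        rw [← sum_mul, sum_Icc_neg_one_pow_card_sub (mem_powerset.mp hU), ite_mul, one_mul,
          zero_mul]
    _ = f S := by rw [sum_ite_eq', if_pos (mem_powerset_self S)]

lemma plog_empty {α : Type*} (p : α → ℝ) : plog p ∅ = 0 := by
  simp [plog, pS]

section Mu

variable {α : Type*} [DecidableEq α]

lemma mu_eq_sum_powerset (p : α → ℝ) (S : Finset α) :
    mu p S = ∑ T ∈ S.powerset, (-1 : ℝ) ^ (#S - #T) * plog p T := by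
  rw [mu, sum_filter]
  refine sum_congr rfl fun T _ => ?_
  split_ifs with hT
  · rfl
  · rw [not_not.mp hT, plog_empty, mul_zero]

lemma mu_empty (p : α → ℝ) : mu p ∅ = 0 := by
  simp [mu_eq_sum_powerset, plog_empty]

lemma sum_powerset_mu (p : α → ℝ) (S : Finset α) : ∑ T ∈ S.powerset, mu p T = plog p S := by
  simp only [mu_eq_sum_powerset]
  exact moebius_inversion_powerset (plog p) S

end Mu

section Crossing

variable {α : Type*} [Fintype α] [DecidableEq α]

open scoped Classical

lemma crossed_iff_exists_notMem_part (X : Finpartition (univ : Finset α)) (S : Finset α) :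
    crossed X S ↔ ∃ a ∈ S, ∃ b ∈ S, b ∉ X.part a := by
  constructor
  · rintro ⟨P, hP, Q, hQ, hPQ, ⟨a, ha⟩, ⟨b, hb⟩⟩
    rw [mem_inter] at ha hb
    refine ⟨a, ha.1, b, hb.1, fun hbP => hPQ ?_⟩
    rw [X.part_eq_of_mem hP ha.2] at hbP
    exact X.eq_of_mem_parts hP hQ hbP hb.2
  · rintro ⟨a, haS, b, hbS, hb⟩
    have hself : ∀ c, c ∈ X.part c := fun c => X.mem_part_self.mpr (mem_univ c)
    exact ⟨X.part a, X.part_mem.mpr (mem_univ a), X.part b, X.part_mem.mpr (mem_univ b),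
      fun h => hb (h ▸ hself b), ⟨a, mem_inter.mpr ⟨haS, hself a⟩⟩,
      ⟨b, mem_inter.mpr ⟨hbS, hself b⟩⟩⟩

lemma two_le_card_of_crossed {X : Finpartition (univ : Finset α)} {S : Finset α}
    (h : crossed X S) : 2 ≤ #S := by
  obtain ⟨a, ha, b, hb, hba⟩ := (crossed_iff_exists_notMem_part X S).mp h
  exact one_lt_card.mpr ⟨a, ha, b, hb, fun hab => hba (hab ▸ X.mem_part_self.mpr (mem_univ a))⟩

lemma not_crossed_iff_exists_subset_part {X : Finpartition (univ : Finset α)} {S : Finset α}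
    (hS : S.Nonempty) : ¬ crossed X S ↔ ∃ P ∈ X.parts, S ⊆ P := by
  simp only [crossed_iff_exists_notMem_part, not_exists, not_and, not_not]
  constructor
  · obtain ⟨a, ha⟩ := hS
    exact fun h => ⟨X.part a, X.part_mem.mpr (mem_univ a), h a ha⟩
  · rintro ⟨P, hP, hSP⟩ a ha b hb
    rw [X.part_eq_of_mem hP (hSP ha)]
    exact hSP hb

lemma content_eq_filter_crossed (X : Finpartition (univ : Finset α)) :
    content X = univ.filter (crossed X) := by
  ext S
  simp only [content, mem_filter, mem_univ, true_and, and_iff_right_iff_imp]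
  exact two_le_card_of_crossed

lemma mem_part_inf_iff (X Y : Finpartition (univ : Finset α)) (a b : α) :
    b ∈ (X ⊓ Y).part a ↔ b ∈ X.part a ∧ b ∈ Y.part a := by
  have ha : a ∈ X.part a ∩ Y.part a :=
    mem_inter.mpr ⟨X.mem_part_self.mpr (mem_univ a), Y.mem_part_self.mpr (mem_univ a)⟩
  have hpart : X.part a ∩ Y.part a ∈ (X ⊓ Y).parts := by
    rw [Finpartition.parts_inf, mem_erase, bot_eq_empty, ← nonempty_iff_ne_empty]
    exact ⟨⟨a, ha⟩, mem_image.mpr ⟨(X.part a, Y.part a),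
      mem_product.mpr ⟨X.part_mem.mpr (mem_univ a), Y.part_mem.mpr (mem_univ a)⟩, rfl⟩⟩
  rw [(X ⊓ Y).part_eq_of_mem hpart ha, mem_inter]

lemma crossed_inf_iff (X Y : Finpartition (univ : Finset α)) (S : Finset α) :
    crossed (X ⊓ Y) S ↔ crossed X S ∨ crossed Y S := by
  simp only [crossed_iff_exists_notMem_part, mem_part_inf_iff, not_and_or, and_or_left,
    exists_or]

lemma content_inf (X Y : Finpartition (univ : Finset α)) :
    content (X ⊓ Y) = content X ∪ content Y := by
  simp only [content_eq_filter_crossed, crossed_inf_iff, filter_or]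

lemma sum_mu_not_crossed (p : α → ℝ) (X : Finpartition (univ : Finset α)) :
    ∑ T with ¬ crossed X T, mu p T = ∑ P ∈ X.parts, plog p P := by
  have hsets : (univ.filter (¬ crossed X ·)).erase ∅ =
      X.parts.biUnion fun P => P.powerset.erase ∅ := by
    ext T
    simp only [mem_erase, mem_filter, mem_univ, true_and, mem_biUnion, mem_powerset,
      ← nonempty_iff_ne_empty]
    constructor
    · rintro ⟨hT, hc⟩
      obtain ⟨P, hP, hTP⟩ := (not_crossed_iff_exists_subset_part hT).mp hc
      exact ⟨P, hP, hT, hTP⟩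
    · rintro ⟨P, hP, hT, hTP⟩
      exact ⟨hT, (not_crossed_iff_exists_subset_part hT).mpr ⟨P, hP, hTP⟩⟩
  have hdisj : (X.parts : Set (Finset α)).PairwiseDisjoint fun P => P.powerset.erase ∅ := by
    intro P hP Q hQ hPQ
    rw [Function.onFun, disjoint_left]
    intro T hTP hTQ
    rw [mem_erase, mem_powerset, ← nonempty_iff_ne_empty] at hTP hTQ
    obtain ⟨a, ha⟩ := hTP.1
    exact hPQ (X.eq_of_mem_parts hP hQ (hTP.2 ha) (hTQ.2 ha))
  calc ∑ T with ¬ crossed X T, mu p T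
      = ∑ T ∈ (univ.filter (¬ crossed X ·)).erase ∅, mu p T := (sum_erase _ (mu_empty p)).symm
    _ = ∑ P ∈ X.parts, ∑ T ∈ P.powerset.erase ∅, mu p T := by rw [hsets, sum_biUnion hdisj]
    _ = ∑ P ∈ X.parts, plog p P := sum_congr rfl fun P _ => by
        rw [sum_erase _ (mu_empty p), sum_powerset_mu]

lemma Hent_eq_muSet_content (p : α → ℝ) (hsum : ∑ a, p a = 1)
    (X : Finpartition (univ : Finset α)) : Hent p X = muSet p (content X) := by
  have htotal : ∑ T, mu p T = 0 := by
    rw [← powerset_univ, sum_powerset_mu]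
    simp [plog, pS, hsum]
  rw [← sum_filter_add_sum_filter_not univ (crossed X), sum_mu_not_crossed] at htotal
  rw [Hent, muSet, content_eq_filter_crossed]
  simp only [plog] at htotal
  linarith

end Crossing

theorem mutualInfo_eq_muSet_inter_general {Ω : Type*} [Fintype Ω] [DecidableEq Ω] (p : Ω → ℝ)
    (hsum : ∑ ω, p ω = 1)
    (X Y : Finpartition (univ : Finset Ω)) :
    Hent p X + Hent p Y - Hent p (X ⊓ Y) = muSet p (content X ∩ content Y) := by
  simp only [Hent_eq_muSet_content p hsum, content_inf, muSet]
  linarith [sum_union_inter (s₁ := content X) (s₂ := content Y) (f := mu p)]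

theorem mutualInfo_eq_muSet_inter {Ω : Type*} [Fintype Ω] [DecidableEq Ω] (p : Ω → ℝ)
    (hp : ∀ ω, 0 ≤ p ω) (hsum : ∑ ω, p ω = 1)
    (X Y : Finpartition (univ : Finset Ω)) :
    Hent p X + Hent p Y - Hent p (X ⊓ Y) = muSet p (content X ∩ content Y) :=
  mutualInfo_eq_muSet_inter_general p hsum X Y
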